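/- arXiv:1610.05723 — 3 statements merged into one kernel-verified Lean document; each statement's English description precedes it below -/
import Mathlib

section
/- Let σ be a finite type of variables and R a commutative ring. In the ring of formal power series in t over MvPolynomial σ R, set H = Σ_{k≥0} h_k t^k and P = Σ_{k≥1} p_k t^k. Then t·(dH/dt) = P·H; equivalently, for every n ≥ 1 one has n • h_n = Σ_{i=1}^{n} p_i · h_{n−i}. -/
open PowerSeries MvPolynomial Finset

/-!
Let `C_j(n) = Σ_s mult_j(s) x^s` be `h_n` with each monomial weighted by the multiplicity of `x_j`
in it (that is, `x_j ∂h_n/∂x_j`). Peeling one factor `x_j` off the monomials containing it gives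
`C_j(n+1) = x_j (h_n + C_j(n))`, hence `h_n + C_j(n) = Σ_{a+b=n} x_j^a h_b`. Sum
`x_j (h_n + C_j(n)) = C_j(n+1)` over `j`: the left side becomes `Σ_{a+b=n} p_{a+1} h_b`, and on the
right the multiplicities add up to the degree, giving `(n+1) h_{n+1}`. This is the coefficient of
`t^n` in `H' = (Σ_k p_{k+1} t^k) H`.
-/

theorem Sym.sum_filter_mem_eq_sum_cons {α M : Type*} [DecidableEq α] [Fintype α]
    [AddCommMonoid M] (a : α) (n : ℕ) (f : Sym α (n + 1) → M) :
    ∑ s with a ∈ s, f s = ∑ t : Sym α n, f (a ::ₛ t) := by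
  refine (Finset.sum_bij (fun t _ => a ::ₛ t) (fun t _ => by simp)
    (fun _ _ _ _ => (Sym.cons_inj_right a _ _).mp) (fun s hs => ?_) fun _ _ => rfl).symm
  obtain ⟨t, rfl⟩ := Sym.exists_cons_of_mem (mem_filter.mp hs).2
  exact ⟨t, mem_univ _, rfl⟩

theorem Finset.Nat.sum_antidiagonal_eq_sum_Icc_succ {M : Type*} [AddCommMonoid M]
    (f : ℕ → ℕ → M) (n : ℕ) :
    ∑ a ∈ antidiagonal n, f (a.1 + 1) a.2 = ∑ i ∈ Icc 1 (n + 1), f i (n + 1 - i) := by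
  rw [Nat.sum_antidiagonal_eq_sum_range_succ (fun i j => f (i + 1) j), ← Ico_add_one_right_eq_Icc,
    sum_Ico_eq_sum_range, Nat.add_sub_cancel]
  refine sum_congr rfl fun i _ => ?_
  rw [add_comm 1 i, Nat.add_sub_add_right]

theorem PowerSeries.X_mul_mk_succ {R : Type*} [Semiring R] (f : ℕ → R) :
    X * mk (fun k => f (k + 1)) = mk fun k => if k = 0 then 0 else f k := by
  ext (_ | k) <;> simp [coeff_succ_X_mul]

namespace MvPolynomial

variable {σ : Type*} (R : Type*) [CommSemiring R] [Fintype σ] [DecidableEq σ]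

theorem sum_count_smul_prod_X_succ (j : σ) (n : ℕ) :
    ∑ s : Sym σ (n + 1), s.1.count j • (s.1.map X).prod
      = X j * (hsymm σ R n + ∑ t : Sym σ n, t.1.count j • (t.1.map (X (R := R))).prod) := by
  have hvanish (s : Sym σ (n + 1)) (hs : s.1.count j • (s.1.map (X (R := R))).prod ≠ 0) :
      j ∈ s := by
    contrapose! hs
    rw [Multiset.count_eq_zero_of_notMem hs, zero_smul]
  rw [← sum_filter_of_ne fun s _ => hvanish s, Sym.sum_filter_mem_eq_sum_cons, hsymm,
    ← sum_add_distrib, mul_sum]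
  refine sum_congr rfl fun t _ => ?_
  simp only [Sym.cons, Multiset.count_cons_self, Multiset.map_cons, Multiset.prod_cons, add_smul,
    one_smul, mul_add, mul_smul_comm, add_comm]

theorem sum_antidiagonal_X_pow_mul_hsymm (j : σ) (n : ℕ) :
    ∑ a ∈ antidiagonal n, X j ^ a.1 * hsymm σ R a.2
      = hsymm σ R n + ∑ s : Sym σ n, s.1.count j • (s.1.map X).prod := by
  induction n with
  | zero => simp [Sym.eq_nil_of_card_zero]
  | succ n ih =>
    simp only [Nat.sum_antidiagonal_succ, pow_zero, one_mul, pow_succ', mul_assoc, ← mul_sum, ih,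
      sum_count_smul_prod_X_succ]

theorem sum_sum_count_smul_prod_X (n : ℕ) :
    ∑ j : σ, ∑ s : Sym σ n, s.1.count j • (s.1.map X).prod = n • hsymm σ R n := by
  rw [sum_comm, hsymm, smul_sum]
  refine sum_congr rfl fun s _ => ?_
  rw [← sum_smul, Multiset.sum_count_eq_card fun _ _ => mem_univ _, s.2]

theorem sum_antidiagonal_psum_succ_mul_hsymm (n : ℕ) :
    ∑ a ∈ antidiagonal n, psum σ R (a.1 + 1) * hsymm σ R a.2
      = (n + 1) • hsymm σ R (n + 1) := by
  simp only [psum, sum_mul, pow_succ', mul_assoc]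
  rw [sum_comm]
  simp only [← mul_sum, sum_antidiagonal_X_pow_mul_hsymm, ← sum_count_smul_prod_X_succ,
    sum_sum_count_smul_prod_X]

theorem derivative_mk_hsymm :
    d⁄dX (MvPolynomial σ R) (mk (hsymm σ R))
      = mk (fun k => psum σ R (k + 1)) * mk (hsymm σ R) := by
  ext n : 1
  simp only [coeff_derivative, PowerSeries.coeff_mul, coeff_mk]
  rw [sum_antidiagonal_psum_succ_mul_hsymm, nsmul_eq_mul, mul_comm, Nat.cast_add_one]

end MvPolynomial

/-- With `H = Σ_{k≥0} h_k t^k` and `P = Σ_{k≥1} p_k t^k` in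
`(MvPolynomial σ R)⟦t⟧`, one has `t·(dH/dt) = P·H`; equivalently, for every `n ≥ 1`,
`n • h_n = Σ_{i=1}^n p_i · h_{n-i}`. -/
theorem stmt0 (σ R : Type*) [Fintype σ] [DecidableEq σ] [CommRing R] :
    (PowerSeries.X * PowerSeries.derivative (MvPolynomial σ R) (PowerSeries.mk fun k => hsymm σ R k)
        = (PowerSeries.mk fun k => if k = 0 then 0 else psum σ R k)
            * PowerSeries.mk fun k => hsymm σ R k)
      ∧ ∀ n : ℕ, 1 ≤ n →
          n • hsymm σ R n = ∑ i ∈ Finset.Icc 1 n, psum σ R i * hsymm σ R (n - i) := by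
  refine ⟨?_, fun n hn => ?_⟩
  · rw [derivative_mk_hsymm, ← mul_assoc, X_mul_mk_succ]
  · obtain ⟨m, rfl⟩ := Nat.exists_eq_add_of_le' hn
    rw [← sum_antidiagonal_psum_succ_mul_hsymm,
      Nat.sum_antidiagonal_eq_sum_Icc_succ (fun i j => psum σ R i * hsymm σ R j)]
end

section
/- Let σ be a finite type of variables. For k ≥ 1 define the Möbius-inverted power sums p'_k := (1/k) Σ_{d ∣ k} μ(k/d) p_d in MvPolynomial σ ℚ, where μ is the Möbius function. Then, in formal power series in t over MvPolynomial σ ℚ, Σ_{k≥0} h_k t^k = Π_{k≥1} (1 − t^k)^{−p'_k}, where (1 − t^k)^{−a} := exp(a · Σ_{m≥1} t^{km}/m) and the infinite product converges coefficientwise (in each degree n only the factors with k ≤ n contribute). -/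
/-!
Take logarithms. The exponent of the product is `Σ_k p'_k Σ_m t^{km}/m`, whose
`t^j`-coefficient is `(1/j) Σ_{k ∣ j} k p'_k = p_j / j` by Möbius inversion; as every divisor
of `j ≤ n` is at most `n`, dropping the factors with `k > n` changes neither these coefficients
for `j ≤ n` nor the coefficients of the exponential up to degree `n`. On the other side
`Σ_j p_j t^j / j = Σ_i -log(1 - x_i t)`, whose exponential is `Π_i 1/(1 - x_i t) = Σ_k h_k t^k`.
The exponential turns sums into products because `exp (f + g)` and `exp f · exp g` both solve
`y' = (f + g)' y` with `y(0) = 1`, and over a `ℚ`-algebra such a linear differential equation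
has at most one power-series solution.
-/

open PowerSeries MvPolynomial Finset

/-- The exponential `exp(g) = Σ_{n≥0} g^n/n!` of a formal power series over a `ℚ`-algebra.
For `g` with zero constant term each coefficient is a finite sum: the coefficient of `t^n`
only receives contributions from `g^m` with `m ≤ n`. -/
noncomputable def expPS {A : Type*} [CommRing A] [Algebra ℚ A] (g : PowerSeries A) :
    PowerSeries A :=
  PowerSeries.mk fun n =>
    ∑ m ∈ Finset.range (n + 1), (m.factorial : ℚ)⁻¹ • PowerSeries.coeff (R := A) n (g ^ m)

/-- The series `Σ_{m≥1} t^{km}/m = -log(1 - t^k)` over a `ℚ`-algebra `A`. -/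
noncomputable def negLogOneSub (A : Type*) [CommRing A] [Algebra ℚ A] (k : ℕ) :
    PowerSeries A :=
  PowerSeries.mk fun j =>
    if k ∣ j ∧ j ≠ 0 then (((j / k : ℕ) : ℚ)⁻¹ : ℚ) • (1 : A) else 0

/-- `(1 - t^k)^{-a} := exp( a · Σ_{m≥1} t^{km}/m )`. -/
noncomputable def onePowNeg {A : Type*} [CommRing A] [Algebra ℚ A] (k : ℕ) (a : A) :
    PowerSeries A :=
  expPS (a • negLogOneSub A k)

/-- The Möbius-inverted power sums `p'_k := (1/k) Σ_{d ∣ k} μ(k/d) p_d` in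
`MvPolynomial σ ℚ`. -/
noncomputable def moebiusPsum (σ : Type*) [Fintype σ] (k : ℕ) : MvPolynomial σ ℚ :=
  ((k : ℚ)⁻¹ : ℚ) • ∑ d ∈ k.divisors,
    (ArithmeticFunction.moebius (k / d) : ℤ) • psum σ ℚ d

lemma algebraMap_inv_mul_natCast {A : Type*} [Semiring A] [Algebra ℚ A] {n : ℕ} (hn : n ≠ 0) :
    algebraMap ℚ A (n : ℚ)⁻¹ * n = 1 := by
  rw [← map_natCast (algebraMap ℚ A), ← map_mul, inv_mul_cancel₀ (Nat.cast_ne_zero.2 hn), map_one]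

namespace PowerSeries

variable {A : Type*} [CommRing A]

lemma coeff_pow_eq_zero_of_lt {g : A⟦X⟧} (hg : constantCoeff g = 0) {n m : ℕ} (h : n < m) :
    coeff n (g ^ m) = 0 :=
  coeff_of_lt_order _ ((Nat.cast_lt.2 h).trans_le (le_order_pow_of_constantCoeff_eq_zero m hg))

lemma coeff_eq_of_X_pow_dvd_sub {f g : A⟦X⟧} {N n : ℕ} (h : X ^ N ∣ f - g) (hn : n < N) :
    coeff n f = coeff n g :=
  sub_eq_zero.1 (by simpa using X_pow_dvd_iff.1 h n hn)

variable [Algebra ℚ A]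

lemma coeff_expPS (g : A⟦X⟧) (n : ℕ) :
    coeff n (expPS g) = ∑ m ∈ range (n + 1), (m.factorial : ℚ)⁻¹ • coeff n (g ^ m) :=
  coeff_mk _ _

lemma constantCoeff_expPS (g : A⟦X⟧) : constantCoeff (expPS g) = 1 := by
  simp [← coeff_zero_eq_constantCoeff, coeff_expPS]

noncomputable def expTrunc (N : ℕ) (g : A⟦X⟧) : A⟦X⟧ :=
  ∑ m ∈ range N, (m.factorial : ℚ)⁻¹ • g ^ m

lemma derivative_expTrunc_succ (N : ℕ) (g : A⟦X⟧) :
    d⁄dX A (expTrunc (N + 1) g) = d⁄dX A g * expTrunc N g := by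
  rw [expTrunc, expTrunc, map_sum, sum_range_succ', mul_sum]
  simp only [Derivation.map_smul_of_tower, Derivation.leibniz_pow, pow_zero,
    Derivation.map_one_eq_zero, smul_zero, add_zero, Nat.add_sub_cancel]
  refine sum_congr rfl fun m _ => ?_
  rw [smul_eq_mul, mul_comm (g ^ m), mul_smul_comm, ← Nat.cast_smul_eq_nsmul ℚ, smul_smul]
  congr 1
  rw [Nat.factorial_succ]
  push_cast
  field_simp

lemma X_pow_dvd_expPS_sub_expTrunc {g : A⟦X⟧} (hg : constantCoeff g = 0) (N : ℕ) :
    X ^ N ∣ expPS g - expTrunc N g := by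
  refine X_pow_dvd_iff.2 fun n hn => ?_
  rw [map_sub, coeff_expPS, expTrunc, map_sum, sub_eq_zero]
  refine sum_subset (range_subset_range.2 hn) fun m _ hm => ?_
  rw [coeff_pow_eq_zero_of_lt hg (by simpa using hm), smul_zero]

lemma derivative_expPS {g : A⟦X⟧} (hg : constantCoeff g = 0) :
    d⁄dX A (expPS g) = d⁄dX A g * expPS g := by
  ext n
  have htop := X_pow_dvd_expPS_sub_expTrunc hg (n + 2)
  have hlow := dvd_mul_of_dvd_right (X_pow_dvd_expPS_sub_expTrunc hg (n + 1)) (d⁄dX A g)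
  rw [mul_sub] at hlow
  rw [coeff_derivative, coeff_eq_of_X_pow_dvd_sub htop (by omega), ← coeff_derivative,
    derivative_expTrunc_succ, coeff_eq_of_X_pow_dvd_sub hlow (by omega)]

lemma eq_zero_of_derivative_eq_mul {w h : A⟦X⟧} (hw : d⁄dX A w = h * w)
    (h0 : constantCoeff w = 0) : w = 0 := by
  ext n
  induction n using Nat.strong_induction_on with
  | _ n ih =>
    rcases n with _ | n
    · simpa using h0
    have hder : coeff n (d⁄dX A w) = 0 := by
      rw [hw, coeff_mul]
      exact sum_eq_zero fun p hp => by
        rw [ih p.2 (by have := mem_antidiagonal.1 hp; omega), map_zero, mul_zero]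
    rw [coeff_derivative, ← Nat.cast_succ] at hder
    rw [map_zero]
    linear_combination algebraMap ℚ A ((n + 1 : ℕ) : ℚ)⁻¹ * hder -
      coeff (n + 1) w * algebraMap_inv_mul_natCast (A := A) n.succ_ne_zero

lemma eq_of_derivative_eq_mul {u v h : A⟦X⟧} (hu : d⁄dX A u = h * u) (hv : d⁄dX A v = h * v)
    (h0 : constantCoeff u = constantCoeff v) : u = v :=
  sub_eq_zero.1 <| eq_zero_of_derivative_eq_mul (h := h) (by rw [map_sub, hu, hv, mul_sub])
    (by rw [map_sub, h0, sub_self])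

lemma expPS_zero : expPS (0 : A⟦X⟧) = 1 :=
  eq_of_derivative_eq_mul (h := 0) (by rw [derivative_expPS (map_zero _)]; simp) (by simp)
    (by simp [constantCoeff_expPS])

lemma expPS_add {f g : A⟦X⟧} (hf : constantCoeff f = 0) (hg : constantCoeff g = 0) :
    expPS (f + g) = expPS f * expPS g := by
  have hfg : constantCoeff (f + g) = 0 := by rw [map_add, hf, hg, add_zero]
  refine eq_of_derivative_eq_mul (derivative_expPS hfg) ?_ (by simp [constantCoeff_expPS])
  rw [Derivation.leibniz, smul_eq_mul, smul_eq_mul, derivative_expPS hf, derivative_expPS hg,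
    map_add]
  ring

lemma expPS_sum {ι : Type*} (s : Finset ι) (f : ι → A⟦X⟧)
    (hf : ∀ i ∈ s, constantCoeff (f i) = 0) :
    expPS (∑ i ∈ s, f i) = ∏ i ∈ s, expPS (f i) := by
  induction s using Finset.cons_induction with
  | empty => exact expPS_zero
  | cons a s ha ih =>
    rw [forall_mem_cons] at hf
    have hs : constantCoeff (∑ i ∈ s, f i) = 0 := by simpa [map_sum] using sum_eq_zero hf.2
    rw [sum_cons, prod_cons, expPS_add hf.1 hs, ih hf.2]

lemma coeff_expPS_congr {f g : A⟦X⟧} {n : ℕ} (h : ∀ j ≤ n, coeff j f = coeff j g) :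
    coeff n (expPS f) = coeff n (expPS g) := by
  have hfg : X ^ (n + 1) ∣ f - g :=
    X_pow_dvd_iff.2 fun j hj => by rw [map_sub, h j (by omega), sub_self]
  simp only [coeff_expPS]
  exact sum_congr rfl fun m _ => by
    rw [coeff_eq_of_X_pow_dvd_sub (hfg.trans (sub_dvd_pow_sub_pow f g m)) n.lt_succ_self]

lemma constantCoeff_negLogOneSub (k : ℕ) : constantCoeff (negLogOneSub A k) = 0 := by
  simp [negLogOneSub]

lemma constantCoeff_rescale_negLogOneSub (a : A) (k : ℕ) :
    constantCoeff (rescale a (negLogOneSub A k)) = 0 := by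
  rw [← coeff_zero_eq_constantCoeff_apply, coeff_rescale, coeff_zero_eq_constantCoeff_apply,
    constantCoeff_negLogOneSub, mul_zero]

lemma coeff_negLogOneSub (k j : ℕ) :
    coeff j (negLogOneSub A k) = if k ∣ j then algebraMap ℚ A ((k : ℚ) / j) else 0 := by
  rw [negLogOneSub, coeff_mk]
  split_ifs with h hkj hkj
  · obtain ⟨⟨m, rfl⟩, hj⟩ := h
    have hk : k ≠ 0 := left_ne_zero_of_mul hj
    rw [Nat.mul_div_cancel_left _ (Nat.pos_of_ne_zero hk), Algebra.algebraMap_eq_smul_one]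
    push_cast
    field_simp
  · exact absurd h.1 hkj
  · obtain rfl : j = 0 := by tauto
    simp
  · rfl

lemma expPS_rescale_negLogOneSub_one (a : A) :
    expPS (rescale a (negLogOneSub A 1)) = mk (a ^ ·) := by
  have hder : d⁄dX A (rescale a (negLogOneSub A 1)) = C a * mk (a ^ ·) := by
    ext n
    rw [coeff_derivative, coeff_rescale, coeff_negLogOneSub, if_pos (one_dvd _), Nat.cast_one,
      one_div, coeff_C_mul, coeff_mk, ← pow_succ', mul_assoc, ← Nat.cast_succ,
      algebraMap_inv_mul_natCast n.succ_ne_zero, mul_one]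
  refine eq_of_derivative_eq_mul
    (derivative_expPS (constantCoeff_rescale_negLogOneSub a 1)) ?_ ?_
  · rw [hder]
    ext n
    have hsum : ∑ p ∈ antidiagonal n, coeff p.1 (mk (a ^ ·)) * coeff p.2 (mk (a ^ ·)) =
        (n + 1) * a ^ n := by
      rw [sum_congr rfl fun p hp => by
        rw [coeff_mk, coeff_mk, ← pow_add, HasAntidiagonal.mem_antidiagonal.1 hp]]
      simp
    rw [coeff_derivative, coeff_mk, mul_assoc, coeff_C_mul, coeff_mul, hsum]
    ring
  · simp [constantCoeff_expPS]

lemma coeff_sum_smul_negLogOneSub (a : ℕ → A) {n j : ℕ} (hj : j ≤ n) :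
    coeff j (∑ k ∈ Icc 1 n, a k • negLogOneSub A k) =
      (j : ℚ)⁻¹ • ∑ k ∈ j.divisors, (k : ℚ) • a k := by
  rcases eq_or_ne j 0 with rfl | hj0
  · simp [coeff_negLogOneSub]
  have hdiv : (Icc 1 n).filter (· ∣ j) = j.divisors := by
    ext k
    simp only [mem_filter, mem_Icc, Nat.mem_divisors]
    constructor
    · rintro ⟨-, hkj⟩
      exact ⟨hkj, hj0⟩
    · rintro ⟨hkj, -⟩
      have hkle := Nat.le_of_dvd (Nat.pos_of_ne_zero hj0) hkj
      exact ⟨⟨Nat.pos_of_dvd_of_pos hkj (Nat.pos_of_ne_zero hj0), hkle.trans hj⟩, hkj⟩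
  simp only [map_sum, coeff_smul, coeff_negLogOneSub, smul_eq_mul, mul_ite, mul_zero]
  rw [← sum_filter, hdiv, smul_sum]
  refine sum_congr rfl fun k _ => ?_
  rw [smul_smul, Algebra.smul_def, mul_comm, div_eq_inv_mul]

lemma prod_onePowNeg (s : Finset ℕ) (a : ℕ → A) :
    ∏ k ∈ s, onePowNeg k (a k) = expPS (∑ k ∈ s, a k • negLogOneSub A k) :=
  (expPS_sum _ _ fun k _ => by simp [constantCoeff_negLogOneSub]).symm

end PowerSeries

namespace MvPolynomial

section

variable {σ R : Type*} [Fintype σ] [DecidableEq σ] [CommSemiring R]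

lemma coeff_prod_mk_X_pow (n : ℕ) :
    PowerSeries.coeff n (∏ i : σ, PowerSeries.mk ((X i : MvPolynomial σ R) ^ ·)) =
      hsymm σ R n := by
  rw [PowerSeries.coeff_prod, hsymm]
  simp only [PowerSeries.coeff_mk]
  have hcard (l : σ →₀ ℕ) : Multiset.card (Finsupp.toMultiset l) = ∑ i, l i := by
    rw [Finsupp.card_toMultiset, Finsupp.sum_fintype _ _ (by simp)]
    rfl
  refine sum_bij' (fun l hl => ⟨Finsupp.toMultiset l, ?_⟩) (fun s _ => Multiset.toFinsupp s.1)
    (fun _ _ => mem_univ _) (fun s _ => ?_) (fun l _ => by simp) (fun s _ => ?_) (fun l _ => ?_)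
  · rw [hcard]
    exact (mem_finsuppAntidiag.1 hl).1
  · refine mem_finsuppAntidiag.2 ⟨?_, subset_univ _⟩
    rw [← hcard, Multiset.toFinsupp_toMultiset]
    exact s.2
  · ext1
    exact Multiset.toFinsupp_toMultiset s.1
  · rw [eq_comm, Finsupp.toMultiset_map, Finsupp.prod_toMultiset,
      Finsupp.prod_mapDomain_index (fun _ => pow_zero _) (fun _ _ _ => pow_add _ _ _),
      Finsupp.prod_fintype _ _ (fun _ => pow_zero _)]

end

open ArithmeticFunction

variable (σ : Type*) [Fintype σ]

lemma coeff_sum_rescale_negLogOneSub_one (j : ℕ) :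
    PowerSeries.coeff j
        (∑ i : σ, PowerSeries.rescale (X i) (negLogOneSub (MvPolynomial σ ℚ) 1)) =
      (j : ℚ)⁻¹ • psum σ ℚ j := by
  simp [PowerSeries.coeff_negLogOneSub, psum, Algebra.smul_def, sum_mul, mul_comm]

lemma expPS_sum_rescale_negLogOneSub_one [DecidableEq σ] :
    expPS (∑ i : σ, PowerSeries.rescale (X i) (negLogOneSub (MvPolynomial σ ℚ) 1)) =
      PowerSeries.mk (hsymm σ ℚ) := by
  rw [PowerSeries.expPS_sum _ _ fun i _ => PowerSeries.constantCoeff_rescale_negLogOneSub _ 1]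
  ext n
  simp only [PowerSeries.expPS_rescale_negLogOneSub_one, coeff_prod_mk_X_pow,
    PowerSeries.coeff_mk]

lemma sum_divisors_smul_moebiusPsum {j : ℕ} (hj : j ≠ 0) :
    ∑ k ∈ j.divisors, (k : ℚ) • moebiusPsum σ k = psum σ ℚ j := by
  have hk (k : ℕ) (hk : k ∈ j.divisors) : (k : ℚ) • moebiusPsum σ k =
      ∑ d ∈ k.divisors, (moebius (k / d) : ℤ) • psum σ ℚ d := by
    have hk0 : (k : ℚ) ≠ 0 := by exact_mod_cast (Nat.pos_of_mem_divisors hk).ne'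
    rw [moebiusPsum, smul_smul, mul_inv_cancel₀ hk0, one_smul]
  rw [sum_congr rfl hk]
  refine sum_eq_iff_sum_smul_moebius_eq.2 (fun m _ => ?_) j (Nat.pos_of_ne_zero hj)
  exact Nat.sum_divisorsAntidiagonal' (f := fun x y => (moebius x : ℤ) • psum σ ℚ y)

end MvPolynomial

/-- `Σ_{k≥0} h_k t^k = Π_{k≥1} (1 - t^k)^{-p'_k}` over `MvPolynomial σ ℚ`, the
infinite product converging coefficientwise: in each degree `n` only factors with `k ≤ n`
contribute. -/
theorem stmt2 (σ : Type*) [Fintype σ] [DecidableEq σ] :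
    ∀ n : ℕ,
      PowerSeries.coeff (R := MvPolynomial σ ℚ) n (PowerSeries.mk fun k => hsymm σ ℚ k)
        = PowerSeries.coeff (R := MvPolynomial σ ℚ) n
            (∏ k ∈ Finset.Icc 1 n, onePowNeg k (moebiusPsum σ k)) := by
  intro n
  have hlog (j : ℕ) (hj : j ≤ n) :
      PowerSeries.coeff j
          (∑ i : σ, PowerSeries.rescale (X i) (negLogOneSub (MvPolynomial σ ℚ) 1)) =
        PowerSeries.coeff j (∑ k ∈ Icc 1 n, moebiusPsum σ k • negLogOneSub _ k) := by
    rw [PowerSeries.coeff_sum_smul_negLogOneSub _ hj, coeff_sum_rescale_negLogOneSub_one]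
    rcases eq_or_ne j 0 with rfl | hj0
    · simp
    · rw [sum_divisors_smul_moebiusPsum σ hj0]
  rw [PowerSeries.prod_onePowNeg, ← PowerSeries.coeff_expPS_congr hlog,
    expPS_sum_rescale_negLogOneSub_one]
end

section
/- Let f ∈ ℤ[[t]] be a formal power series with constant coefficient 1. Then there exists a unique sequence of integers (a_k)_{k≥1} such that f = Π_{k≥1} (1 − t^k)^{−a_k}, where (1 − t^k)^{−a_k} denotes the (−a_k)-th power of the unit 1 − t^k in the group of units of ℤ[[t]], and the infinite product converges coefficientwise (in each degree n only the factors with k ≤ n contribute). -/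
/-!
For a unit `1 + y` of a commutative ring and every `e : ℤ`, `(1 + y)^e ≡ 1 + e y (mod y²)`.
With `y = -t^k` this gives `(1 - t^k)^{-a} ≡ 1 + a t^k (mod t^{k+1})`, so the coefficient of
`t^n` in `Π_{k ≤ n} (1 - t^k)^{-a_k}` is `a_n` plus a quantity depending only on
`a_1, …, a_{n-1}`. This triangularity determines the `a_n` recursively from the coefficients
of `f`, which gives existence and uniqueness at once.
-/

open PowerSeries Finset

/-- Integer power `g^a` of a power series `g` whose constant coefficient is a unit (so that
`g` is a unit in `R⟦t⟧`): for `a ≥ 0` the usual power, for `a < 0` the power of the inverse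
(computed via `Ring.inverse`). -/
noncomputable def unitZPow {R : Type*} [CommRing R] (g : PowerSeries R) (a : ℤ) :
    PowerSeries R :=
  if 0 ≤ a then g ^ a.toNat else Ring.inverse (g ^ (-a).toNat)

theorem Units.sq_dvd_coe_zpow_sub_one_sub_mul {M : Type*} [CommRing M] (u : Mˣ) (y : M)
    (hu : (u : M) = 1 + y) (e : ℤ) : y ^ 2 ∣ ↑(u ^ e) - 1 - e * y := by
  induction e using Int.induction_on with
  | zero => simp
  | succ e ih =>
    have key : ↑(u ^ ((e : ℤ) + 1)) - 1 - ((e + 1 : ℤ) : M) * y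
        = (↑(u ^ (e : ℤ)) - 1 - ((e : ℤ) : M) * y) * (1 + y) + e * y ^ 2 := by
      rw [zpow_add_one, Units.val_mul, hu]; push_cast; ring
    rw [key]
    exact dvd_add (ih.mul_right _) (Dvd.intro_left _ rfl)
  | pred e ih =>
    rw [← Units.dvd_mul_right (u := u)]
    have hshift : ↑(u ^ (-(e : ℤ) - 1)) * (u : M) = ↑(u ^ (-(e : ℤ))) := by
      rw [← Units.val_mul, zpow_sub_one, _root_.inv_mul_cancel_right]
    have key : (↑(u ^ (-(e : ℤ) - 1)) - 1 - ((-(e : ℤ) - 1 : ℤ) : M) * y) * u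
        = (↑(u ^ (-(e : ℤ))) - 1 - ((-(e : ℤ) : ℤ) : M) * y) + (e + 1 : M) * y ^ 2 := by
      rw [sub_mul, sub_mul, hshift, hu]; push_cast; ring
    rw [key]
    exact dvd_add ih (Dvd.intro_left _ rfl)

section

variable {R : Type*} [CommRing R]

theorem unitZPow_units (u : R⟦X⟧ˣ) (a : ℤ) : unitZPow (u : R⟦X⟧) a = ↑(u ^ a) := by
  unfold unitZPow
  split_ifs with h
  · rw [← Units.val_pow_eq_pow_val, ← zpow_natCast, Int.toNat_of_nonneg h]
  · rw [← Units.val_pow_eq_pow_val, Ring.inverse_unit, ← zpow_natCast, ← zpow_neg,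
      Int.toNat_of_nonneg (by omega), neg_neg]

theorem isUnit_one_sub_X_pow {k : ℕ} (hk : k ≠ 0) : IsUnit (1 - X ^ k : R⟦X⟧) := by
  simp [isUnit_iff_constantCoeff, hk]

theorem constantCoeff_unitZPow_one_sub_X_pow {k : ℕ} (hk : k ≠ 0) (e : ℤ) :
    constantCoeff (unitZPow (1 - X ^ k : R⟦X⟧) e) = 1 := by
  obtain ⟨u, hu⟩ := isUnit_one_sub_X_pow (R := R) hk
  have hu1 : Units.map (constantCoeff (R := R)).toMonoidHom u = 1 := by
    ext; simp [hu, hk]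
  rw [← hu, unitZPow_units]
  have := congrArg Units.val (map_zpow (Units.map (constantCoeff (R := R)).toMonoidHom) u e)
  rw [hu1, one_zpow] at this
  exact this

theorem X_pow_succ_dvd_unitZPow_one_sub_X_pow_sub {k : ℕ} (hk : k ≠ 0) (e : ℤ) :
    (X : R⟦X⟧) ^ (k + 1) ∣ unitZPow (1 - X ^ k : R⟦X⟧) e - (1 - C (e : R) * X ^ k) := by
  obtain ⟨u, hu⟩ := isUnit_one_sub_X_pow (R := R) hk
  have h := u.sq_dvd_coe_zpow_sub_one_sub_mul (-X ^ k) (by rw [hu]; ring) e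
  rw [← hu, unitZPow_units]
  refine (pow_dvd_pow X (by omega : k + 1 ≤ 2 * k)).trans ?_
  convert h using 1
  · ring
  · rw [← map_intCast (C (R := R))]; ring

theorem coeff_mul_of_X_pow_succ_dvd_sub {A B : R⟦X⟧} {n : ℕ} {c : R}
    (h : X ^ (n + 1) ∣ B - (1 - C c * X ^ n)) :
    coeff n (A * B) = coeff n A - c * constantCoeff A := by
  obtain ⟨r, hr⟩ := h
  have hB : A * B = A - C c * (A * X ^ n) + X ^ (n + 1) * (A * r) := by
    linear_combination A * hr
  have hhigh : coeff n (X ^ (n + 1) * (A * r)) = 0 :=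
    X_pow_dvd_iff.mp (dvd_mul_right _ _) n (Nat.lt_succ_self n)
  have hmid : coeff n (A * X ^ n) = constantCoeff A := by simpa using coeff_mul_X_pow A n 0
  rw [hB, map_add, map_sub, hhigh, coeff_C_mul, hmid, add_zero]

end

noncomputable def eulerProduct (a : ℕ → ℤ) (n : ℕ) : ℤ⟦X⟧ :=
  ∏ k ∈ Icc 1 n, unitZPow (1 - X ^ k) (-(a k))

theorem constantCoeff_eulerProduct (a : ℕ → ℤ) (n : ℕ) :
    constantCoeff (eulerProduct a n) = 1 :=
  (map_prod _ _ _).trans <| prod_eq_one fun k hk ↦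
    constantCoeff_unitZPow_one_sub_X_pow (by grind) _

theorem eulerProduct_congr {a b : ℕ → ℤ} {n : ℕ} (h : ∀ k ∈ Icc 1 n, a k = b k) :
    eulerProduct a n = eulerProduct b n :=
  prod_congr rfl fun k hk ↦ by rw [h k hk]

theorem coeff_eulerProduct_self (a : ℕ → ℤ) {n : ℕ} (hn : n ≠ 0) :
    coeff n (eulerProduct a n) = coeff n (eulerProduct a (n - 1)) + a n := by
  obtain ⟨m, rfl⟩ : ∃ m, n = m + 1 := ⟨n - 1, by omega⟩
  have hsplit : eulerProduct a (m + 1)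
      = eulerProduct a m * unitZPow (1 - X ^ (m + 1)) (-(a (m + 1))) :=
    prod_Icc_succ_top (Nat.le_add_left 1 m) _
  rw [hsplit, coeff_mul_of_X_pow_succ_dvd_sub (X_pow_succ_dvd_unitZPow_one_sub_X_pow_sub hn _),
    constantCoeff_eulerProduct, Nat.add_sub_cancel, Int.cast_neg, Int.cast_id]
  ring

theorem eq_of_coeff_eulerProduct_eq {a b : ℕ → ℤ}
    (h : ∀ n, coeff n (eulerProduct a n) = coeff n (eulerProduct b n)) :
    ∀ k, 1 ≤ k → a k = b k := by
  intro k
  induction k using Nat.strong_induction_on with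
  | _ k ih =>
    intro hk
    have hlow : eulerProduct a (k - 1) = eulerProduct b (k - 1) :=
      eulerProduct_congr fun j hj ↦ ih j (by grind) (mem_Icc.mp hj).1
    have hk' := h k
    rw [coeff_eulerProduct_self a (by omega), coeff_eulerProduct_self b (by omega), hlow] at hk'
    exact add_left_cancel hk'

noncomputable def eulerExponent (f : ℤ⟦X⟧) (n : ℕ) : ℤ :=
  coeff n f -
    coeff n (∏ k ∈ (Icc 1 (n - 1)).attach, unitZPow (1 - X ^ (k : ℕ)) (-(eulerExponent f k)))
termination_by n
decreasing_by grind

theorem eulerExponent_eq (f : ℤ⟦X⟧) (n : ℕ) :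
    eulerExponent f n = coeff n f - coeff n (eulerProduct (eulerExponent f) (n - 1)) := by
  rw [eulerExponent, eulerProduct,
    prod_attach (Icc 1 (n - 1)) fun k ↦ unitZPow (1 - X ^ k) (-(eulerExponent f k))]

theorem coeff_eulerProduct_eulerExponent {f : ℤ⟦X⟧} (hf : constantCoeff f = 1) (n : ℕ) :
    coeff n f = coeff n (eulerProduct (eulerExponent f) n) := by
  rcases eq_or_ne n 0 with rfl | hn
  · simp [hf, constantCoeff_eulerProduct]
  · rw [coeff_eulerProduct_self _ hn, eulerExponent_eq]
    ring

/-- every `f ∈ ℤ[[t]]` with constant coefficient `1` has a unique expression as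
a coefficientwise-convergent Euler product `f = Π_{k≥1} (1 - t^k)^{-a_k}` with integers
`a_k`; in each degree `n` only the factors with `k ≤ n` contribute. -/
theorem stmt3 (f : PowerSeries ℤ) (hf : PowerSeries.constantCoeff (R := ℤ) f = 1) :
    ∃ a : ℕ → ℤ,
      (∀ n : ℕ,
        PowerSeries.coeff (R := ℤ) n f
          = PowerSeries.coeff (R := ℤ) n
              (∏ k ∈ Finset.Icc 1 n, unitZPow (1 - PowerSeries.X ^ k) (-(a k)))) ∧
      ∀ b : ℕ → ℤ,
        (∀ n : ℕ,
          PowerSeries.coeff (R := ℤ) n f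
            = PowerSeries.coeff (R := ℤ) n
                (∏ k ∈ Finset.Icc 1 n, unitZPow (1 - PowerSeries.X ^ k) (-(b k)))) →
        ∀ k : ℕ, 1 ≤ k → b k = a k :=
  ⟨eulerExponent f, coeff_eulerProduct_eulerExponent hf, fun _ hb ↦
    eq_of_coeff_eulerProduct_eq fun n ↦ (hb n).symm.trans (coeff_eulerProduct_eulerExponent hf n)⟩
end
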